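/- Fix x_P ∈ ℂ^α. The map ψ : ℂ^{QR} × ℂ^{L-α} → ℂ^{QR+L-α} defined by ψ(s, x_D) = P(I_R ⊗ XQ)s, where x = (x_P, x_D) and X = diag(x), is holomorphic, and at every point (s, x_D) with all entries of x_D nonzero, its Jacobian matrix J(s, x_D) = ∂(Pȳ)/∂(s, x_D) (the matrix of complex partial derivatives of ψ with respect to the coordinates of s and of x_D) factorizes as J(s, x_D) = J1(x_D)·J2(s)·J3(x_D), where J1(x_D) = P(I_R ⊗ X)P^T, J2(s) = P[I_R ⊗ Q | a_{α+1} | … | a_L], and J3(x_D) = diag(I_{QR}, diag(x_D)^{-1}), with a_i = (I_R ⊗ diag(e_i)Q)s ∈ ℂ^{LR} for i ∈ [1:L]. -/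

import Mathlib

/-!
Entry `(m, j)` of `ψ(s, x_D)` is `x_j · (Q s_m)_j`: the product of a function that is affine in
`x_D` (a pilot constant for `j < α`, the coordinate `x_D,(j−α)` otherwise) and a function linear
in `s`. The product rule gives the Jacobian entries `δ_{m m'} x_j Q_{jq}` in the direction
`s_{m',q}` and `δ_{j,α+k} (Q s_m)_j` in the direction `x_D,k`. On the other side,
`P (I_R ⊗ X) Pᵀ` is diagonal with entries `x_j`, and the column of `J2 J3` belonging to `x_D,k`
is `a_{α+k} / x_D,k`, supported on the rows `j = α + k`, where `x_j = x_D,k` cancels the division.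
-/

open Matrix Kronecker

noncomputable section

/-- The block-diagonal row-selection matrix `P = diag((I_L)_{I_1}, …, (I_L)_{I_R})` for
arbitrary index sets `I_1, …, I_R ⊆ [1:L]`: row `(m, j)` (with `j ∈ I m`), column
`(m', j')` carries a `1` iff `m = m'` and `j = j'`. -/
def selBlocksSet {L R : ℕ} (I : Fin R → Finset (Fin L)) :
    Matrix ((m : Fin R) × {j : Fin L // j ∈ I m}) (Fin R × Fin L) ℂ :=
  Matrix.of fun r mj => if r.1 = mj.1 ∧ (r.2 : Fin L) = mj.2 then 1 else 0

/-- The vector `a_i = (I_R ⊗ diag(e_i) Q) s ∈ ℂ^{LR}`. -/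
def aVec {L Q R : ℕ} (Qmat : Matrix (Fin L) (Fin Q) ℂ) (s : Fin R × Fin Q → ℂ)
    (i : Fin L) : Fin R × Fin L → ℂ :=
  ((1 : Matrix (Fin R) (Fin R) ℂ) ⊗ₖ
    (Matrix.diagonal (fun j => if j = i then (1 : ℂ) else 0) * Qmat)).mulVec s

/-- The full input vector `x = (x_P, x_D) ∈ ℂ^L` assembled from the pilot symbols
`x_P ∈ ℂ^α` (the first `α` entries) and the data symbols `x_D ∈ ℂ^{L−α}`. -/
def xFull (L α : ℕ) (xP : Fin α → ℂ) (xD : Fin (L - α) → ℂ) : Fin L → ℂ :=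
  fun i => if h : (i : ℕ) < α then xP ⟨i, h⟩
    else xD ⟨(i : ℕ) - α, by have := i.2; omega⟩

section SelectionMatrix

variable {L R : ℕ} (I : Fin R → Finset (Fin L))

lemma selBlocksSet_mul_apply {n : Type*} [Fintype n] (M : Matrix (Fin R × Fin L) n ℂ)
    (r : (m : Fin R) × {j : Fin L // j ∈ I m}) (c : n) :
    (selBlocksSet I * M) r c = M (r.1, r.2) c := by
  simp [Matrix.mul_apply, Fintype.sum_prod_type, selBlocksSet, ite_and]

lemma mul_selBlocksSet_transpose_apply {n : Type*} (M : Matrix n (Fin R × Fin L) ℂ)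
    (c : n) (r : (m : Fin R) × {j : Fin L // j ∈ I m}) :
    (M * (selBlocksSet I)ᵀ) c r = M c (r.1, r.2) := by
  simp [Matrix.mul_apply, Fintype.sum_prod_type, selBlocksSet, ite_and, eq_comm]

lemma selBlocksSet_mul_kronecker_diagonal_mul_transpose (v : Fin L → ℂ) :
    selBlocksSet I * ((1 : Matrix (Fin R) (Fin R) ℂ) ⊗ₖ Matrix.diagonal v) *
        (selBlocksSet I)ᵀ
      = Matrix.diagonal fun r : (m : Fin R) × {j : Fin L // j ∈ I m} => v r.2 := by
  ext r r'
  simp only [mul_selBlocksSet_transpose_apply, selBlocksSet_mul_apply,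
    Matrix.kroneckerMap_apply, Matrix.one_apply, Matrix.diagonal_apply]
  by_cases h : r = r'
  · subst h; simp
  · have : ¬(r.1 = r'.1 ∧ (r.2 : Fin L) = r'.2) := fun h' => h (Sigma.subtype_ext h'.1 h'.2)
    rw [not_and] at this
    by_cases h1 : r.1 = r'.1 <;> simp [h, h1, this]

end SelectionMatrix

lemma aVec_apply {L Q R : ℕ} (Qmat : Matrix (Fin L) (Fin Q) ℂ) (s : Fin R × Fin Q → ℂ)
    (i : Fin L) (m : Fin R) (j : Fin L) :
    aVec Qmat s i (m, j) = if j = i then ∑ q, Qmat j q * s (m, q) else 0 := by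
  simp [aVec, Matrix.mulVec, dotProduct, Matrix.mul_apply, Matrix.diagonal_apply,
    Fintype.sum_prod_type, Matrix.one_apply]

section FullSymbolVector

variable {L α : ℕ}

lemma xFull_add (xP xP' : Fin α → ℂ) (xD xD' : Fin (L - α) → ℂ) :
    xFull L α (xP + xP') (xD + xD') = xFull L α xP xD + xFull L α xP' xD' := by
  ext i
  by_cases h : (i : ℕ) < α <;> simp [xFull, h]

lemma xFull_smul (c : ℂ) (xP : Fin α → ℂ) (xD : Fin (L - α) → ℂ) :
    xFull L α (c • xP) (c • xD) = c • xFull L α xP xD := by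
  ext i
  by_cases h : (i : ℕ) < α <;> simp [xFull, h]

variable (L α) in
def xDataEmbedding : (Fin (L - α) → ℂ) →L[ℂ] (Fin L → ℂ) :=
  LinearMap.toContinuousLinearMap
    { toFun := xFull L α 0
      map_add' := fun xD xD' => by simpa using xFull_add (L := L) 0 0 xD xD'
      map_smul' := fun c xD => by simpa using xFull_smul (L := L) c 0 xD }

lemma xDataEmbedding_apply (xD : Fin (L - α) → ℂ) : xDataEmbedding L α xD = xFull L α 0 xD :=
  rfl

lemma hasFDerivAt_xFull (xP : Fin α → ℂ) (xD : Fin (L - α) → ℂ) :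
    HasFDerivAt (xFull L α xP) (xDataEmbedding L α) xD := by
  have : xFull L α xP = fun xD => xFull L α xP 0 + xDataEmbedding L α xD := by
    ext xD : 1
    simpa [xDataEmbedding_apply] using xFull_add xP 0 0 xD
  rw [this]
  exact (xDataEmbedding L α).hasFDerivAt.const_add _

lemma xFull_apply_add (xP : Fin α → ℂ) (xD : Fin (L - α) → ℂ) (j : Fin (L - α))
    (h : α + j < L) : xFull L α xP xD ⟨α + j, h⟩ = xD j := by
  simp [xFull]

lemma xDataEmbedding_single (j : Fin (L - α)) (i : Fin L) :
    xDataEmbedding L α (Pi.single j 1) i = if i = ⟨α + j, by omega⟩ then 1 else 0 := by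
  rw [xDataEmbedding_apply, xFull]
  split_ifs with h1 h2 h2 <;> simp [Pi.single_apply, Fin.ext_iff] at * <;> omega

end FullSymbolVector

lemma selBlocksSet_mul_kronecker_mulVec_apply {L Q R : ℕ} (I : Fin R → Finset (Fin L))
    (x : Fin L → ℂ) (Qmat : Matrix (Fin L) (Fin Q) ℂ) (s : Fin R × Fin Q → ℂ)
    (r : (m : Fin R) × {j : Fin L // j ∈ I m}) :
    ((selBlocksSet I * ((1 : Matrix (Fin R) (Fin R) ℂ) ⊗ₖ (Matrix.diagonal x * Qmat))) *ᵥ s)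
        r
      = x r.2 * ∑ q, Qmat r.2 q * s (r.1, q) := by
  simp only [Matrix.mulVec, dotProduct, selBlocksSet_mul_apply]
  simp [Matrix.mul_apply, Matrix.diagonal_apply, Matrix.one_apply, Fintype.sum_prod_type,
    Finset.mul_sum, mul_assoc]

def restrictInr (n m : Type*) : ((n ⊕ m) → ℂ) →L[ℂ] (m → ℂ) :=
  ContinuousLinearMap.pi fun k => ContinuousLinearMap.proj (Sum.inr k)

lemma restrictInr_single_inl {n m : Type*} [DecidableEq n] [DecidableEq m] (p : n) :
    restrictInr n m (Pi.single (Sum.inl p) 1) = 0 := by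
  ext k
  simp [restrictInr]

lemma restrictInr_single_inr {n m : Type*} [DecidableEq n] [DecidableEq m] (k : m) :
    restrictInr n m (Pi.single (Sum.inr k) 1) = Pi.single k 1 := by
  ext k'
  simp [restrictInr, Pi.single_apply]

section Jacobian

variable {L Q R α : ℕ} (Qmat : Matrix (Fin L) (Fin Q) ℂ) (xP : Fin α → ℂ)

lemma hasFDerivAt_xFull_mul_sum (m : Fin R) (i : Fin L)
    (z : (Fin R × Fin Q) ⊕ Fin (L - α) → ℂ) :
    HasFDerivAt
      (fun w : (Fin R × Fin Q) ⊕ Fin (L - α) → ℂ =>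
        xFull L α xP (fun k => w (Sum.inr k)) i * ∑ q, Qmat i q * w (Sum.inl (m, q)))
      (xFull L α xP (fun k => z (Sum.inr k)) i •
          ∑ q, Qmat i q • ContinuousLinearMap.proj (Sum.inl (m, q)) +
        (∑ q, Qmat i q * z (Sum.inl (m, q))) •
          (ContinuousLinearMap.proj i).comp ((xDataEmbedding L α).comp (restrictInr _ _)))
      z := by
  have hx := (ContinuousLinearMap.proj (R := ℂ) (φ := fun _ : Fin L => ℂ) i).hasFDerivAt.comp z
    ((hasFDerivAt_xFull xP _).comp z (restrictInr (Fin R × Fin Q) (Fin (L - α))).hasFDerivAt)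
  have hs := HasFDerivAt.fun_sum (u := Finset.univ) fun q _ =>
    (hasFDerivAt_apply (𝕜 := ℂ) (Sum.inl (m, q)) z).const_mul (Qmat i q)
  exact hx.mul hs

lemma fderiv_xFull_mul_sum_single_inl (m m' : Fin R) (q : Fin Q) (i : Fin L)
    (z : (Fin R × Fin Q) ⊕ Fin (L - α) → ℂ) :
    fderiv ℂ (fun w : (Fin R × Fin Q) ⊕ Fin (L - α) → ℂ =>
        xFull L α xP (fun k => w (Sum.inr k)) i * ∑ q, Qmat i q * w (Sum.inl (m, q))) z
        (Pi.single (Sum.inl (m', q)) 1)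
      = if m = m' then xFull L α xP (fun k => z (Sum.inr k)) i * Qmat i q else 0 := by
  simp [(hasFDerivAt_xFull_mul_sum Qmat xP m i z).fderiv, restrictInr_single_inl, Pi.single_apply,
    ite_and]

lemma fderiv_xFull_mul_sum_single_inr (m : Fin R) (i : Fin L) (k : Fin (L - α))
    (z : (Fin R × Fin Q) ⊕ Fin (L - α) → ℂ) :
    fderiv ℂ (fun w : (Fin R × Fin Q) ⊕ Fin (L - α) → ℂ =>
        xFull L α xP (fun k => w (Sum.inr k)) i * ∑ q, Qmat i q * w (Sum.inl (m, q))) z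
        (Pi.single (Sum.inr k) 1)
      = if i = ⟨α + k, by omega⟩ then ∑ q, Qmat i q * z (Sum.inl (m, q)) else 0 := by
  simp [(hasFDerivAt_xFull_mul_sum Qmat xP m i z).fderiv, restrictInr_single_inr,
    xDataEmbedding_single]

end Jacobian

theorem statement3 {L Q R α : ℕ}
    (Qmat : Matrix (Fin L) (Fin Q) ℂ)
    (I : Fin R → Finset (Fin L))
    (xP : Fin α → ℂ)
    (ψ : (((Fin R × Fin Q) ⊕ Fin (L - α)) → ℂ) →
      ((m : Fin R) × {j : Fin L // j ∈ I m}) → ℂ)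
    (hψ : ψ = fun z r =>
      ((selBlocksSet I) *
        ((1 : Matrix (Fin R) (Fin R) ℂ) ⊗ₖ
          (Matrix.diagonal (xFull L α xP (fun j => z (Sum.inr j))) * Qmat))).mulVec
        (fun p => z (Sum.inl p)) r) :
    Differentiable ℂ ψ ∧
      ∀ z : ((Fin R × Fin Q) ⊕ Fin (L - α)) → ℂ,
        (∀ j : Fin (L - α), z (Sum.inr j) ≠ 0) →
        (Matrix.of fun r cc => fderiv ℂ (fun w => ψ w r) z (Pi.single cc 1))
          = (selBlocksSet I *
                ((1 : Matrix (Fin R) (Fin R) ℂ) ⊗ₖ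
                  Matrix.diagonal (xFull L α xP (fun j => z (Sum.inr j)))) *
                (selBlocksSet I)ᵀ) *
            (selBlocksSet I *
              Matrix.fromCols ((1 : Matrix (Fin R) (Fin R) ℂ) ⊗ₖ Qmat)
                (Matrix.of fun rj (j : Fin (L - α)) =>
                  aVec Qmat (fun p => z (Sum.inl p))
                    ⟨α + (j : ℕ), by have := j.2; omega⟩ rj)) *
            Matrix.fromBlocks 1 0 0
              (Matrix.diagonal fun j : Fin (L - α) => (z (Sum.inr j))⁻¹) := by
  have hψr : ∀ r, (fun w => ψ w r) = fun w =>
      xFull L α xP (fun k => w (Sum.inr k)) r.2 * ∑ q, Qmat r.2 q * w (Sum.inl (r.1, q)) := by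
    intro r
    ext w
    rw [hψ]
    exact selBlocksSet_mul_kronecker_mulVec_apply I _ Qmat _ r
  refine ⟨differentiable_pi.2 fun r z => ?_, fun z hz => ?_⟩
  · rw [hψr]
    exact (hasFDerivAt_xFull_mul_sum Qmat xP r.1 r.2 z).differentiableAt
  -- The outermost product of the statement elaborates with the `CStarMatrix` multiplication
  -- instance; it is definitionally `Matrix` multiplication, which the `Matrix` lemmas need.
  change _ = @HMul.hMul (Matrix _ ((Fin R × Fin Q) ⊕ Fin (L - α)) ℂ) _ _
    Matrix.instHMulOfFintypeOfMulOfAddCommMonoid _ _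
  rw [selBlocksSet_mul_kronecker_diagonal_mul_transpose, Matrix.mul_assoc, Matrix.mul_assoc,
    fromCols_mul_fromBlocks]
  ext r (⟨m, q⟩ | k)
  · simp [hψr, fderiv_xFull_mul_sum_single_inl, selBlocksSet_mul_apply, Matrix.one_apply]
  · simp only [hψr, fderiv_xFull_mul_sum_single_inr, Matrix.of_apply, Matrix.diagonal_mul,
      selBlocksSet_mul_apply, Matrix.mul_zero, zero_add, Matrix.fromCols_apply_inr,
      Matrix.mul_diagonal, aVec_apply]
    split_ifs with h
    · rw [h, xFull_apply_add]
      field_simp [hz k]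
    · simp
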